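/- arXiv:0812.1584 — 4 statements merged into one kernel-verified Lean document; each statement's English description precedes it below -/
import Mathlib

section
/- Let V be a finite-dimensional symplectic vector space over a field K of characteristic zero with symplectic form ω, let W(V) be its Weyl algebra, and let L ⊆ V be a Lagrangian subspace. Then in the W(V)-module W(V)/W(V)L, the subspace annihilated by L, {m : ℓ·m = 0 for all ℓ ∈ L}, is one-dimensional, spanned by the image of 1. -/
/-- The defining relations of the Weyl algebra of `(V, ω)`:
`u * v - v * u = ω u v`. -/
inductive WeylRel {K V : Type*} [Field K] [AddCommGroup V] [Module K V]
    (ω : V →ₗ[K] V →ₗ[K] K) :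
    TensorAlgebra K V → TensorAlgebra K V → Prop
  | mk (u v : V) : WeylRel ω
      (TensorAlgebra.ι K u * TensorAlgebra.ι K v - TensorAlgebra.ι K v * TensorAlgebra.ι K u)
      (algebraMap K (TensorAlgebra K V) (ω u v))

/-- The Weyl algebra of `(V, ω)`. -/
def WeylAlg (K V : Type*) [Field K] [AddCommGroup V] [Module K V]
    (ω : V →ₗ[K] V →ₗ[K] K) : Type _ :=
  RingQuot (WeylRel ω)

noncomputable instance WeylAlg.instRing (K V : Type*) [Field K] [AddCommGroup V] [Module K V]
    (ω : V →ₗ[K] V →ₗ[K] K) : Ring (WeylAlg K V ω) :=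
  inferInstanceAs (Ring (RingQuot (WeylRel ω)))

noncomputable instance WeylAlg.instAlgebra (K V : Type*) [Field K] [AddCommGroup V]
    [Module K V] (ω : V →ₗ[K] V →ₗ[K] K) : Algebra K (WeylAlg K V ω) :=
  inferInstanceAs (Algebra K (RingQuot (WeylRel ω)))

/-- The canonical linear embedding `V → W(V)`. -/
noncomputable def WeylAlg.of {K V : Type*} [Field K] [AddCommGroup V] [Module K V]
    (ω : V →ₗ[K] V →ₗ[K] K) (v : V) : WeylAlg K V ω :=
  RingQuot.mkAlgHom K (WeylRel ω) (TensorAlgebra.ι K v)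

namespace WeylAux

open MvPolynomial

variable {K V : Type*} [Field K] [AddCommGroup V] [Module K V] (ω : V →ₗ[K] V →ₗ[K] K)

/-- `WeylAlg.of` as a linear map. -/
noncomputable def ofL : V →ₗ[K] WeylAlg K V ω :=
  (RingQuot.mkAlgHom K (WeylRel ω)).toLinearMap ∘ₗ TensorAlgebra.ι K

lemma ofL_apply (v : V) : ofL ω v = WeylAlg.of ω v := rfl

lemma of_comm (u v : V) :
    WeylAlg.of ω u * WeylAlg.of ω v - WeylAlg.of ω v * WeylAlg.of ω u
      = algebraMap K (WeylAlg K V ω) (ω u v) := by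
  have h := RingQuot.mkAlgHom_rel K (WeylRel.mk (ω := ω) u v)
  simp only [map_sub, map_mul, AlgHom.commutes] at h
  exact h

variable {ι : Type*}

lemma mkDerivation_add' (f g : ι → MvPolynomial ι K) :
    mkDerivation K (f + g) = mkDerivation K f + mkDerivation K g :=
  derivation_ext fun i => by simp [mkDerivation_X]

lemma mkDerivation_smul' (c : K) (f : ι → MvPolynomial ι K) :
    mkDerivation K (c • f) = c • mkDerivation K f :=
  derivation_ext fun i => by simp [mkDerivation_X]

lemma mkDerivation_zero' :
    mkDerivation K (0 : ι → MvPolynomial ι K) = 0 :=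
  derivation_ext fun i => by simp [mkDerivation_X]

/-- The generator action: multiplication by `lp v` plus the constant-coefficient derivation
with coefficients `dc v`. -/
noncomputable def rep0 (lp : V →ₗ[K] MvPolynomial ι K) (dc : V →ₗ[K] (ι → K)) :
    V →ₗ[K] Module.End K (MvPolynomial ι K) where
  toFun v := LinearMap.mulLeft K (lp v) +
    ((mkDerivation K (fun i => C (dc v i) : ι → MvPolynomial ι K)) : _ →ₗ[K] _)
  map_add' u v := by
    refine LinearMap.ext fun g => ?_
    have hf : (fun i => C (dc (u + v) i) : ι → MvPolynomial ι K)
        = (fun i => C (dc u i)) + fun i => C (dc v i) := by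
      funext i; rw [map_add]; exact map_add C _ _
    rw [lp.map_add, hf, mkDerivation_add']
    simp only [LinearMap.add_apply, LinearMap.mulLeft_apply, Derivation.coe_add_linearMap,
      Derivation.add_apply, add_mul]
    abel
  map_smul' c v := by
    refine LinearMap.ext fun g => ?_
    have hf : (fun i => C (dc (c • v) i) : ι → MvPolynomial ι K)
        = c • (fun i => C (dc v i) : ι → MvPolynomial ι K) := by
      funext i
      rw [map_smul]
      show C ((c • dc v) i) = (c • (fun i => C (dc v i) : ι → MvPolynomial ι K)) i
      simp [Pi.smul_apply, smul_eq_C_mul, map_mul, smul_eq_mul]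
    rw [lp.map_smul, hf, mkDerivation_smul']
    simp only [RingHom.id_apply, LinearMap.add_apply, LinearMap.smul_apply,
      LinearMap.mulLeft_apply, Derivation.coe_smul_linearMap, Derivation.smul_apply,
      smul_mul_assoc, smul_add]

lemma rep0_apply (lp : V →ₗ[K] MvPolynomial ι K) (dc : V →ₗ[K] (ι → K)) (v : V)
    (g : MvPolynomial ι K) :
    rep0 lp dc v g = lp v * g + mkDerivation K (fun i => C (dc v i)) g := rfl

lemma derivation_comm (f g : ι → K) (p : MvPolynomial ι K) :
    mkDerivation K (fun i => C (f i) : ι → MvPolynomial ι K)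
        (mkDerivation K (fun i => C (g i) : ι → MvPolynomial ι K) p)
      = mkDerivation K (fun i => C (g i) : ι → MvPolynomial ι K)
        (mkDerivation K (fun i => C (f i) : ι → MvPolynomial ι K) p) := by
  induction p using MvPolynomial.induction_on with
  | C a => simp
  | add p q hp hq => simp [hp, hq]
  | mul_X p i hp =>
    simp only [Derivation.leibniz, smul_eq_mul, map_add, map_mul, mkDerivation_X,
      derivation_C]
    simp only [Derivation.leibniz, smul_eq_mul, map_add, map_mul, mkDerivation_X,
      derivation_C, hp]
    ring

/-- The representation of the Weyl algebra on polynomials. -/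
noncomputable def rep (lp : V →ₗ[K] MvPolynomial ι K) (dc : V →ₗ[K] (ι → K))
    (hc : ∀ u v : V, mkDerivation K (fun i => C (dc u i) : ι → MvPolynomial ι K) (lp v)
        - mkDerivation K (fun i => C (dc v i) : ι → MvPolynomial ι K) (lp u) = C (ω u v)) :
    WeylAlg K V ω →ₐ[K] Module.End K (MvPolynomial ι K) :=
  RingQuot.liftAlgHom K ⟨TensorAlgebra.lift K (rep0 lp dc), by
    rintro x y ⟨u, v⟩
    rw [map_sub, map_mul, map_mul, TensorAlgebra.lift_ι_apply, TensorAlgebra.lift_ι_apply,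
      AlgHom.commutes]
    refine LinearMap.ext fun p => ?_
    have hcomm := derivation_comm (dc u) (dc v) p
    have hkey := hc u v
    simp only [LinearMap.sub_apply, Module.End.mul_apply, rep0_apply, map_add,
      Derivation.leibniz, smul_eq_mul, Module.algebraMap_end_apply, smul_eq_C_mul]
    rw [← hkey]
    ring_nf
    rw [hcomm]
    ring⟩

lemma rep_of (lp : V →ₗ[K] MvPolynomial ι K) (dc : V →ₗ[K] (ι → K))
    (hc : ∀ u v : V, mkDerivation K (fun i => C (dc u i) : ι → MvPolynomial ι K) (lp v)
        - mkDerivation K (fun i => C (dc v i) : ι → MvPolynomial ι K) (lp u) = C (ω u v))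
    (v : V) :
    rep ω lp dc hc (WeylAlg.of ω v) = rep0 lp dc v := by
  have h : rep ω lp dc hc (WeylAlg.of ω v)
      = TensorAlgebra.lift K (rep0 lp dc) (TensorAlgebra.ι K v) :=
    RingQuot.liftAlgHom_mkAlgHom_apply (S := K) (TensorAlgebra.lift K (rep0 lp dc)) _
      (TensorAlgebra.ι K v)
  rw [h, TensorAlgebra.lift_ι_apply]

lemma eq_C_of_pderiv_eq_zero [CharZero K] [DecidableEq ι] (g : MvPolynomial ι K)
    (h : ∀ i, pderiv i g = 0) : g = C (coeff 0 g) := by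
  ext m
  by_cases hm : m = 0
  · subst hm; simp
  · obtain ⟨i, hi⟩ : ∃ i, m i ≠ 0 := by
      by_contra hc
      push_neg at hc
      exact hm (Finsupp.ext fun i => hc i)
    have h0 : coeff (m - Finsupp.single i 1) (pderiv i g) = (m i : K) * coeff m g := by
      conv_lhs => rw [g.as_sum]
      rw [map_sum, coeff_sum]
      rw [Finset.sum_eq_single m]
      · rw [pderiv_monomial, coeff_monomial, if_pos rfl, mul_comm]
      · intro u hu hum
        rw [pderiv_monomial, coeff_monomial]
        by_cases hui : u i = 0
        · simp [hui]
        · rw [if_neg]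
          intro heq
          apply hum
          have h1 : Finsupp.single i 1 ≤ u := by
            rw [Finsupp.single_le_iff]; omega
          have h2 : Finsupp.single i 1 ≤ m := by
            rw [Finsupp.single_le_iff]; omega
          calc u = u - Finsupp.single i 1 + Finsupp.single i 1 := (tsub_add_cancel_of_le h1).symm
            _ = m - Finsupp.single i 1 + Finsupp.single i 1 := by rw [heq]
            _ = m := tsub_add_cancel_of_le h2
      · intro hms
        rw [pderiv_monomial, MvPolynomial.notMem_support_iff.mp hms]
        simp
    rw [h i] at h0
    simp only [coeff_zero] at h0
    have : (m i : K) ≠ 0 := Nat.cast_ne_zero.mpr hi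
    have hcm : coeff m g = 0 := by
      rcases mul_eq_zero.mp h0.symm with h' | h'
      · exact absurd h' this
      · exact h'
    rw [hcm, coeff_C, if_neg (fun h' => hm h'.symm)]

end WeylAux

set_option maxHeartbeats 1600000 in
set_option synthInstance.maxHeartbeats 400000 in
/-- Let `(V, ω)` be a finite-dimensional symplectic vector space over a field
`K` of characteristic `0` and `L ⊆ V` a Lagrangian subspace.  In the left `W(V)`-module
`W(V)/W(V)L`, the subspace annihilated by `L` is one-dimensional, spanned by the image of
`1`: it coincides with the `K`-span of the class of `1`, which is nonzero. -/
theorem weyl_module_invariants_one_dimensional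
    {K V : Type*} [Field K] [CharZero K] [AddCommGroup V] [Module K V]
    [FiniteDimensional K V]
    (ω : V →ₗ[K] V →ₗ[K] K)
    (hskew : ∀ u v : V, ω u v = - ω v u)
    (hnondeg : ∀ u : V, (∀ v : V, ω u v = 0) → u = 0)
    (L : Submodule K V)
    (hiso : ∀ u ∈ L, ∀ v ∈ L, ω u v = 0)
    (hlag : 2 * Module.finrank K L = Module.finrank K V)
    (I : Submodule (WeylAlg K V ω) (WeylAlg K V ω))
    (hI : I = Submodule.span (WeylAlg K V ω) (WeylAlg.of ω '' (L : Set V))) :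
    {m : WeylAlg K V ω ⧸ I | ∀ v ∈ L, WeylAlg.of ω v • m = 0} =
        (Submodule.span K {Submodule.Quotient.mk (1 : WeylAlg K V ω)} :
          Submodule K (WeylAlg K V ω ⧸ I)) ∧
      (Submodule.Quotient.mk (1 : WeylAlg K V ω) : WeylAlg K V ω ⧸ I) ≠ 0 := by
  classical
  obtain ⟨U, hU⟩ := Submodule.exists_isCompl L
  have hrankU : Module.finrank K ↥U = Module.finrank K ↥L := by
    have h := Submodule.finrank_add_eq_of_isCompl hU
    omega
  set θ : ↥L →ₗ[K] Module.Dual K ↥U := ω.compl₁₂ L.subtype U.subtype with hθdef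
  have hθinj : Function.Injective θ := by
    rw [← LinearMap.ker_eq_bot, LinearMap.ker_eq_bot']
    intro ℓ hℓ
    have hωℓ : ∀ v : V, ω ℓ v = 0 := by
      intro v
      have hv : ((L.projectionOnto U hU v : V) + (U.projectionOnto L hU.symm v : V))
          = v := Submodule.projection_add_projection_eq_self hU v
      rw [← hv, map_add]
      have h1 : ω ℓ (L.projectionOnto U hU v : V) = 0 :=
        hiso _ ℓ.2 _ (L.projectionOnto U hU v).2
      have h2 : ω ℓ (U.projectionOnto L hU.symm v : V) = 0 := by
        have := LinearMap.congr_fun hℓ (U.projectionOnto L hU.symm v)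
        simpa [hθdef] using this
      rw [h1, h2, add_zero]
    exact Submodule.coe_eq_zero.mp (hnondeg _ hωℓ)
  have hθsurj : Function.Surjective θ := by
    refine (LinearMap.injective_iff_surjective_of_finrank_eq_finrank ?_).mp hθinj
    rw [Subspace.dual_finrank_eq, hrankU]
  set c : ↥U →ₗ[K] ↥L :=
    (LinearEquiv.ofBijective θ ⟨hθinj, hθsurj⟩).symm.toLinearMap ∘ₗ
      ((2⁻¹ : K) • ω.compl₁₂ U.subtype U.subtype) with hcdef
  have hc : ∀ u w : U, ω (c u) w = 2⁻¹ * ω u w := by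
    intro u w
    have h1 : θ (c u) = ((2⁻¹ : K) • ω.compl₁₂ U.subtype U.subtype) u :=
      (LinearEquiv.ofBijective θ ⟨hθinj, hθsurj⟩).apply_symm_apply _
    have h2 := LinearMap.congr_fun h1 w
    simpa [hθdef] using h2
  set fP : ↥U →ₗ[K] V := U.subtype - L.subtype ∘ₗ c with hfPdef
  have hfP : ∀ u : U, fP u = (u : V) - (c u : V) := fun u => rfl
  set P : Submodule K V := LinearMap.range fP with hPdef
  have hPL : IsCompl L P := by
    constructor
    · rw [Submodule.disjoint_def]
      intro x hxL hxP
      obtain ⟨u, rfl⟩ := hxP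
      have hu : (u : V) ∈ L := by
        have he : (u : V) = fP u + (c u : V) := by rw [hfP]; abel
        rw [he]
        exact L.add_mem hxL (c u).2
      have hu0 : u = 0 := by
        have := Submodule.disjoint_def.mp hU.disjoint _ hu u.2
        exact Subtype.ext this
      rw [hu0, map_zero]
    · rw [codisjoint_iff_le_sup]
      intro v _
      have hv : ((L.projectionOnto U hU v : V) + (U.projectionOnto L hU.symm v : V))
          = v := Submodule.projection_add_projection_eq_self hU v
      set ℓ := L.projectionOnto U hU v
      set u := U.projectionOnto L hU.symm v
      have : v = ((ℓ : V) + (c u : V)) + fP u := by rw [hfP, ← hv]; abel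
      rw [this]
      exact Submodule.add_mem_sup (L.add_mem ℓ.2 (c u).2) (LinearMap.mem_range_self fP u)
  have hPiso : ∀ x ∈ P, ∀ y ∈ P, ω x y = 0 := by
    rintro x ⟨u, rfl⟩ y ⟨w, rfl⟩
    rw [hfP, hfP]
    have h2 : (2 : K) ≠ 0 := two_ne_zero
    have e1 : ω (c u) (w : V) = 2⁻¹ * ω u w := hc u w
    have e2 : ω (c w) (u : V) = 2⁻¹ * ω w u := hc w u
    have e3 : ω (c u : V) (c w : V) = 0 := hiso _ (c u).2 _ (c w).2
    have e4 : ω (w : V) (u : V) = - ω (u : V) (w : V) := hskew _ _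
    have e5 : ω (u : V) (c w : V) = - ω (c w) (u : V) := hskew _ _
    simp only [map_sub, LinearMap.sub_apply]
    rw [e1, e3, e5, e2, e4]
    field_simp
    ring
  -- rank of P and basis
  have hrankP : Module.finrank K ↥P = Module.finrank K ↥L := by
    have hinjf : Function.Injective fP := by
      rw [← LinearMap.ker_eq_bot, LinearMap.ker_eq_bot']
      intro u hu
      have hul : (u : V) ∈ L := by
        have he : (u : V) = fP u + (c u : V) := by rw [hfP]; abel
        rw [he, hu, zero_add]
        exact (c u).2
      exact Subtype.ext (Submodule.disjoint_def.mp hU.disjoint _ hul u.2)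
    rw [hPdef, LinearMap.finrank_range_of_inj hinjf, hrankU]
  set n := Module.finrank K ↥P with hn
  set bP : Module.Basis (Fin n) K ↥P := Module.finBasis K ↥P with hbP
  set πL : V →ₗ[K] ↥L := L.projectionOnto P hPL with hπL
  set πP : V →ₗ[K] ↥P := P.projectionOnto L hPL.symm with hπP
  have hdecomp : ∀ v : V, ((πL v : V) + (πP v : V)) = v := fun v =>
    Submodule.projection_add_projection_eq_self hPL v
  set lp : V →ₗ[K] MvPolynomial (Fin n) K :=
    (bP.constr K fun i => (MvPolynomial.X i : MvPolynomial (Fin n) K)) ∘ₗ πP with hlp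
  set dcL : ↥L →ₗ[K] (Fin n → K) :=
    LinearMap.pi (fun j => (ω.flip (bP j : V)) ∘ₗ L.subtype) with hdcLdef
  set dc : V →ₗ[K] (Fin n → K) := dcL ∘ₗ πL with hdc
  have hdcLapp : ∀ (ℓ : ↥L) (j : Fin n), dcL ℓ j = ω ℓ (bP j : V) := fun ℓ j => rfl
  have hdcapp : ∀ (v : V) (j : Fin n), dc v j = ω (πL v : V) (bP j : V) := fun v j => rfl
  have hlpP : ∀ p : ↥P, lp (p : V) = bP.constr K (fun i => MvPolynomial.X i) p := by
    intro p
    show (bP.constr K _) (πP (p : V)) = _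
    rw [hπP, Submodule.projectionOnto_apply_left]
  have hlpL : ∀ ℓ : ↥L, lp (ℓ : V) = 0 := by
    intro ℓ
    show (bP.constr K _) (πP (ℓ : V)) = 0
    rw [hπP, Submodule.projectionOnto_apply_of_mem_right hPL.symm ℓ.2, map_zero]
  have hdcP : ∀ p : ↥P, dc (p : V) = 0 := by
    intro p
    show dcL (πL (p : V)) = 0
    rw [hπL, Submodule.projectionOnto_apply_of_mem_right hPL p.2, map_zero]
  have hdcLbasis : ∀ ℓ : ↥L, dc (ℓ : V) = dcL ℓ := by
    intro ℓ
    show dcL (πL (ℓ : V)) = dcL ℓ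
    rw [hπL, Submodule.projectionOnto_apply_left hPL ℓ]
  have hDel : ∀ u v : V,
      MvPolynomial.mkDerivation K
          (fun i => MvPolynomial.C (dc u i) : Fin n → MvPolynomial (Fin n) K) (lp v)
        = MvPolynomial.C (ω (πL u : V) (πP v : V)) := by
    intro u v
    have hg : (((MvPolynomial.mkDerivation K
            (fun i => MvPolynomial.C (dc u i) : Fin n → MvPolynomial (Fin n) K)) :
              MvPolynomial (Fin n) K →ₗ[K] MvPolynomial (Fin n) K) ∘ₗ
          (bP.constr K fun i => (MvPolynomial.X i : MvPolynomial (Fin n) K)))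
        = (Algebra.linearMap K (MvPolynomial (Fin n) K)) ∘ₗ ((ω (πL u : V)).comp P.subtype) := by
      refine bP.ext fun i => ?_
      simp only [LinearMap.coe_comp, Function.comp_apply, Module.Basis.constr_basis,
        Derivation.coeFn_coe, MvPolynomial.mkDerivation_X, Algebra.linearMap_apply,
        LinearMap.comp_apply, Submodule.coe_subtype, MvPolynomial.algebraMap_eq]
      rw [hdcapp]
    have h := LinearMap.congr_fun hg (πP v)
    exact h
  have hcomm : ∀ u v : V,
      MvPolynomial.mkDerivation K
          (fun i => MvPolynomial.C (dc u i) : Fin n → MvPolynomial (Fin n) K) (lp v)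
        - MvPolynomial.mkDerivation K
          (fun i => MvPolynomial.C (dc v i) : Fin n → MvPolynomial (Fin n) K) (lp u)
        = MvPolynomial.C (ω u v) := by
    intro u v
    rw [hDel, hDel, ← map_sub]
    congr 1
    have e1 : ω (πL u : V) (πL v : V) = 0 := hiso _ (πL u).2 _ (πL v).2
    have e2 : ω (πP u : V) (πP v : V) = 0 := hPiso _ (πP u).2 _ (πP v).2
    have e3 : ω (πP u : V) (πL v : V) = - ω (πL v : V) (πP u : V) := hskew _ _
    conv_rhs => rw [← hdecomp u, ← hdecomp v]
    simp only [map_add, LinearMap.add_apply]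
    rw [e1, e2, e3]
    ring
  -- the representation
  set ρ : WeylAlg K V ω →ₐ[K] Module.End K (MvPolynomial (Fin n) K) :=
    WeylAux.rep ω lp dc hcomm with hρ
  have hρof : ∀ (v : V) (g : MvPolynomial (Fin n) K),
      ρ (WeylAlg.of ω v) g = lp v * g
        + MvPolynomial.mkDerivation K
            (fun i => MvPolynomial.C (dc v i) : Fin n → MvPolynomial (Fin n) K) g := by
    intro v g
    rw [hρ, WeylAux.rep_of]
    rfl
  have hPcomm : ∀ i j : Fin n, WeylAlg.of ω (bP i : V) * WeylAlg.of ω (bP j : V)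
      = WeylAlg.of ω (bP j : V) * WeylAlg.of ω (bP i : V) := by
    intro i j
    have h := WeylAux.of_comm ω (bP i : V) (bP j : V)
    rw [hPiso _ (bP i).2 _ (bP j).2, map_zero] at h
    exact sub_eq_zero.mp h
  set SPset : Set (WeylAlg K V ω) := Set.range (fun i => WeylAlg.of ω (bP i : V)) with hSPset
  have hSPcomm : ∀ a ∈ SPset, ∀ b ∈ SPset, a * b = b * a := by
    rintro _ ⟨i, rfl⟩ _ ⟨j, rfl⟩; exact hPcomm i j
  letI instCR : CommRing (Algebra.adjoin K SPset) := Algebra.adjoinCommRingOfComm K hSPcomm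
  letI instCS : CommSemiring (Algebra.adjoin K SPset) := instCR.toCommSemiring
  set σ0 : MvPolynomial (Fin n) K →ₐ[K] (Algebra.adjoin K SPset) :=
    MvPolynomial.aeval (fun i => (⟨WeylAlg.of ω (bP i : V),
      Algebra.subset_adjoin (Set.mem_range_self i)⟩ : Algebra.adjoin K SPset)) with hσ0
  set σ : MvPolynomial (Fin n) K →ₐ[K] WeylAlg K V ω :=
    ((Algebra.adjoin K SPset).val).comp σ0 with hσ
  have hσX : ∀ i, σ (MvPolynomial.X i) = WeylAlg.of ω (bP i : V) := by
    intro i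
    rw [hσ, AlgHom.comp_apply, hσ0, MvPolynomial.aeval_X]
    rfl
  have hρσ : ∀ g f : MvPolynomial (Fin n) K, ρ (σ g) f = g * f := by
    have hcompeq : ρ.comp σ = Algebra.lmul K (MvPolynomial (Fin n) K) := by
      refine MvPolynomial.algHom_ext fun i => ?_
      refine LinearMap.ext fun f => ?_
      rw [AlgHom.comp_apply, hσX, hρof]
      have h1 : lp ((bP i : ↥P) : V) = MvPolynomial.X i := by
        rw [hlpP, Module.Basis.constr_basis]
      have h2 : dc ((bP i : ↥P) : V) = 0 := hdcP _
      rw [h1, h2]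
      have h3 : (fun j => MvPolynomial.C ((0 : Fin n → K) j) : Fin n → MvPolynomial (Fin n) K)
          = 0 := by funext j; simp
      rw [h3, WeylAux.mkDerivation_zero']
      simp [Algebra.lmul]
    intro g f
    have h := DFunLike.congr_fun hcompeq g
    have h2 := LinearMap.congr_fun h f
    simpa [Algebra.lmul] using h2
  have hofI : ∀ v ∈ L, WeylAlg.of ω v ∈ I := by
    intro v hv; rw [hI]; exact Submodule.subset_span ⟨v, hv, rfl⟩
  have hΦI : ∀ x ∈ I, ρ x 1 = 0 := by
    intro x hx
    rw [hI] at hx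
    refine Submodule.span_induction ?_ ?_ ?_ ?_ hx
    · rintro y ⟨v, hv, rfl⟩
      rw [hρof]
      have h1 : lp v = 0 := hlpL ⟨v, hv⟩
      rw [h1]
      simp
    · simp
    · intro a b _ _ ha hb
      rw [map_add, LinearMap.add_apply, ha, hb, add_zero]
    · intro w y _ hy
      rw [smul_eq_mul, map_mul, Module.End.mul_apply, hy, map_zero]
  have hone : (1 : WeylAlg K V ω) ∉ I := by
    intro h
    have h1 := hΦI 1 h
    have h2 : ρ 1 = 1 := ρ.map_one
    rw [h2, Module.End.one_apply] at h1
    exact one_ne_zero h1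
  have hofP : ∀ p : ↥P, WeylAlg.of ω (p : V) ∈ σ.range := by
    intro p
    have hg : (σ.toLinearMap ∘ₗ
          (bP.constr K fun i => (MvPolynomial.X i : MvPolynomial (Fin n) K)))
        = (WeylAux.ofL ω) ∘ₗ P.subtype := by
      refine bP.ext fun i => ?_
      simp only [LinearMap.coe_comp, Function.comp_apply, Module.Basis.constr_basis,
        AlgHom.toLinearMap_apply, Submodule.coe_subtype]
      rw [hσX, WeylAux.ofL_apply]
    have h := LinearMap.congr_fun hg p
    refine ⟨bP.constr K (fun i => MvPolynomial.X i) p, ?_⟩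
    simpa [WeylAux.ofL_apply] using h
  have hcommSigma : ∀ v ∈ L, ∀ g : MvPolynomial (Fin n) K,
      WeylAlg.of ω v * σ g - σ g * WeylAlg.of ω v ∈ σ.range := by
    intro v hv g
    induction g using MvPolynomial.induction_on with
    | C a =>
      have hca : σ (MvPolynomial.C a) = algebraMap K (WeylAlg K V ω) a := by
        rw [hσ, AlgHom.comp_apply, hσ0, MvPolynomial.aeval_C]
        simp
      rw [hca, Algebra.commutes, sub_self]
      exact zero_mem _
    | add p q hp hq =>
      have hid : WeylAlg.of ω v * σ (p + q) - σ (p + q) * WeylAlg.of ω v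
          = (WeylAlg.of ω v * σ p - σ p * WeylAlg.of ω v)
            + (WeylAlg.of ω v * σ q - σ q * WeylAlg.of ω v) := by
        rw [map_add]; noncomm_ring
      rw [hid]
      exact add_mem hp hq
    | mul_X p i hp =>
      have hid : WeylAlg.of ω v * σ (p * MvPolynomial.X i)
            - σ (p * MvPolynomial.X i) * WeylAlg.of ω v
          = (WeylAlg.of ω v * σ p - σ p * WeylAlg.of ω v) * σ (MvPolynomial.X i)
            + σ p * (WeylAlg.of ω v * σ (MvPolynomial.X i)
              - σ (MvPolynomial.X i) * WeylAlg.of ω v) := by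
        rw [map_mul]; noncomm_ring
      rw [hid]
      refine add_mem (mul_mem hp ⟨MvPolynomial.X i, rfl⟩) (mul_mem ⟨p, rfl⟩ ?_)
      rw [hσX, WeylAux.of_comm]
      exact σ.range.algebraMap_mem _
  -- spanning
  have hspan : ∀ x : WeylAlg K V ω, ∃ g : MvPolynomial (Fin n) K, x - σ g ∈ I := by
    set T : Submodule K (WeylAlg K V ω) :=
      (Subalgebra.toSubmodule σ.range) ⊔ I.restrictScalars K with hT
    have hmul : ∀ w x : WeylAlg K V ω, x ∈ T → w * x ∈ T := by
      intro w
      obtain ⟨t, rfl⟩ := RingQuot.mkAlgHom_surjective K (WeylRel ω) w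
      induction t using TensorAlgebra.induction with
      | algebraMap r =>
        intro x hx
        have h2 : RingQuot.mkAlgHom K (WeylRel ω) (algebraMap K (TensorAlgebra K V) r)
            = algebraMap K (WeylAlg K V ω) r := AlgHom.commutes _ r
        rw [h2, ← Algebra.smul_def]
        exact T.smul_mem r hx
      | ι v =>
        intro x hx
        have hov : RingQuot.mkAlgHom K (WeylRel ω) (TensorAlgebra.ι K v)
            = WeylAlg.of ω v := rfl
        rw [hov]
        rw [hT, Submodule.mem_sup] at hx
        obtain ⟨a, ha, i, hi, rfl⟩ := hx
        rw [mul_add]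
        refine T.add_mem ?_ ?_
        · obtain ⟨g, hgeq⟩ := ha
          have hgeq' : σ g = a := hgeq
          rw [← hgeq']
          have hv : WeylAlg.of ω v
              = WeylAlg.of ω ((πL v : ↥L) : V) + WeylAlg.of ω ((πP v : ↥P) : V) := by
            rw [← WeylAux.ofL_apply, ← WeylAux.ofL_apply, ← WeylAux.ofL_apply, ← map_add,
              hdecomp]
          rw [hv, add_mul]
          refine T.add_mem ?_ ?_
          · have hsplit : WeylAlg.of ω ((πL v : ↥L) : V) * σ g
                = σ g * WeylAlg.of ω ((πL v : ↥L) : V)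
                  + (WeylAlg.of ω ((πL v : ↥L) : V) * σ g
                    - σ g * WeylAlg.of ω ((πL v : ↥L) : V)) := by noncomm_ring
            rw [hsplit]
            refine T.add_mem ?_ ?_
            · refine Submodule.mem_sup_right ?_
              show σ g * WeylAlg.of ω ((πL v : ↥L) : V) ∈ I
              have hsm : σ g * WeylAlg.of ω ((πL v : ↥L) : V)
                  = σ g • WeylAlg.of ω ((πL v : ↥L) : V) := rfl
              rw [hsm]
              exact I.smul_mem _ (hofI _ (πL v).2)
            · exact Submodule.mem_sup_left (hcommSigma _ (πL v).2 g)
          · have hmm : WeylAlg.of ω ((πP v : ↥P) : V) * σ g ∈ σ.range :=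
              mul_mem (hofP (πP v)) ⟨g, rfl⟩
            exact Submodule.mem_sup_left hmm
        · refine Submodule.mem_sup_right ?_
          show WeylAlg.of ω v * i ∈ I
          have hsm : WeylAlg.of ω v * i = WeylAlg.of ω v • i := rfl
          rw [hsm]
          exact I.smul_mem _ hi
      | mul a b ha hb =>
        intro x hx
        erw [map_mul, mul_assoc]
        exact ha _ (hb _ hx)
      | add a b ha hb =>
        intro x hx
        rw [map_add]
        have hab := T.add_mem (ha _ hx) (hb _ hx)
        convert hab using 1
        exact add_mul (R := RingQuot (WeylRel ω)) _ _ _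
    intro x
    have h1 : (1 : WeylAlg K V ω) ∈ T := Submodule.mem_sup_left (one_mem σ.range)
    have hx : x ∈ T := by simpa using hmul x 1 h1
    rw [hT, Submodule.mem_sup] at hx
    obtain ⟨a, ha, i, hi, rfl⟩ := hx
    obtain ⟨g, hgeq⟩ := ha
    refine ⟨g, ?_⟩
    rw [show σ g = a from hgeq]
    simpa using hi
  constructor
  · ext m
    simp only [Set.mem_setOf_eq, SetLike.mem_coe]
    constructor
    · intro hm
      obtain ⟨x, rfl⟩ := Submodule.Quotient.mk_surjective I m
      obtain ⟨g, hg⟩ := hspan x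
      have hmg : (Submodule.Quotient.mk x : WeylAlg K V ω ⧸ I)
          = Submodule.Quotient.mk (σ g) := by
        rw [Submodule.Quotient.eq]; exact hg
      have hder : ∀ v ∈ L,
          MvPolynomial.mkDerivation K
            (fun i => MvPolynomial.C (dc v i) : Fin n → MvPolynomial (Fin n) K) g = 0 := by
        intro v hv
        have h0 := hm v hv
        rw [hmg] at h0
        have h1 : WeylAlg.of ω v * σ g ∈ I := by
          rw [← Submodule.Quotient.mk_smul I, Submodule.Quotient.mk_eq_zero I] at h0
          rwa [smul_eq_mul] at h0
        have h2 := hΦI _ h1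
        rw [map_mul, Module.End.mul_apply, hρσ, mul_one, hρof] at h2
        have h3 : lp v = 0 := hlpL ⟨v, hv⟩
        rw [h3, zero_mul, zero_add] at h2
        exact h2
      have hpd : ∀ i : Fin n, MvPolynomial.pderiv i g = 0 := by
        have hdcLinj : Function.Injective dcL := by
          rw [← LinearMap.ker_eq_bot, LinearMap.ker_eq_bot']
          intro ℓ hℓ
          have hbasis : ∀ j, ω (ℓ : V) (bP j : V) = 0 := by
            intro j
            have h := congrFun hℓ j
            simpa [hdcLapp] using h
          have hPzero : ∀ p : ↥P, ω (ℓ : V) (p : V) = 0 := by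
            intro p
            have hz : ((ω (ℓ : V)).comp P.subtype) = 0 :=
              bP.ext fun j => by simpa using hbasis j
            have h := LinearMap.congr_fun hz p
            simpa using h
          have hall : ∀ w, ω (ℓ : V) w = 0 := by
            intro w
            rw [← hdecomp w, map_add, hiso _ ℓ.2 _ (πL w).2, hPzero (πP w), add_zero]
          exact Submodule.coe_eq_zero.mp (hnondeg _ hall)
        have hdcLsurj : Function.Surjective dcL := by
          refine (LinearMap.injective_iff_surjective_of_finrank_eq_finrank ?_).mp hdcLinj
          rw [Module.finrank_pi, Fintype.card_fin, ← hrankP]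
        intro i
        obtain ⟨ℓ, hℓ⟩ := hdcLsurj (Pi.single i 1)
        have h := hder ℓ ℓ.2
        have hdcval : dc (ℓ : V) = Pi.single i 1 := by rw [hdcLbasis, hℓ]
        rw [hdcval] at h
        have hfun : (fun j => MvPolynomial.C ((Pi.single i 1 : Fin n → K) j) :
            Fin n → MvPolynomial (Fin n) K) = Pi.single i 1 := by
          funext j
          by_cases hj : j = i
          · subst hj; simp
          · simp [Pi.single_eq_of_ne hj]
        rw [hfun] at h
        rw [MvPolynomial.pderiv_def]
        exact h
      have hgC : g = MvPolynomial.C (MvPolynomial.coeff 0 g) :=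
        WeylAux.eq_C_of_pderiv_eq_zero g hpd
      have hσC : σ g = MvPolynomial.coeff 0 g • (1 : WeylAlg K V ω) := by
        have hca : σ (MvPolynomial.C (MvPolynomial.coeff 0 g))
            = algebraMap K (WeylAlg K V ω) (MvPolynomial.coeff 0 g) := by
          rw [hσ, AlgHom.comp_apply, hσ0, MvPolynomial.aeval_C]
          simp
        conv_lhs => rw [hgC]
        rw [hca, Algebra.algebraMap_eq_smul_one]
      rw [hmg, hσC, Submodule.Quotient.mk_smul]
      exact Submodule.smul_mem _ _ (Submodule.mem_span_singleton_self _)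
    · intro hm
      rw [Submodule.mem_span_singleton] at hm
      obtain ⟨a, rfl⟩ := hm
      intro v hv
      have h1 : (a • (Submodule.Quotient.mk 1 : WeylAlg K V ω ⧸ I))
          = Submodule.Quotient.mk (algebraMap K (WeylAlg K V ω) a) := by
        rw [← Submodule.Quotient.mk_smul, Algebra.algebraMap_eq_smul_one]
      rw [h1, ← Submodule.Quotient.mk_smul, Submodule.Quotient.mk_eq_zero]
      show WeylAlg.of ω v * algebraMap K (WeylAlg K V ω) a ∈ I
      rw [← Algebra.commutes a (WeylAlg.of ω v)]
      have h2 : algebraMap K (WeylAlg K V ω) a * WeylAlg.of ω v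
          = algebraMap K (WeylAlg K V ω) a • WeylAlg.of ω v := rfl
      rw [h2]
      exact I.smul_mem _ (hofI v hv)
  · rw [Ne, Submodule.Quotient.mk_eq_zero]
    exact hone
end

section
/- Let g be a semisimple Lie algebra over an algebraically closed field of characteristic 0, (e,h,f) an sl2-triple, χ = (e,·), l ⊆ g(−1) a Lagrangian subspace for ω_χ, and m = l ⊕ ⊕_{i≤−2} g(i). Then m is a nilpotent Lie subalgebra of g and χ restricts to a character of m, i.e., χ([m,m]) = 0. -/
/-!
Grade `g` by the eigenvalues of `ad h`. Since `ad h` is a derivation, `[g(i), g(j)] ⊆ g(i + j)`;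
as `m ⊆ g(≤ -1)`, this gives `[m, m] ⊆ g(≤ -2) ⊆ m`, and an `n`-fold bracket of elements of `m`
lies in `g(≤ -1 - n)`, which is zero for large `n`. Invariance of `B` makes `χ = B(e, ·)` vanish
on every `g(i)` with `i ≠ -2`, because `e ∈ g(2)`; hence `χ([m, m]) = χ([l, l]) = 0`.
-/

open LieAlgebra Module

namespace LieAlgebra

variable {K g : Type*} [Field K] [LieRing g] [LieAlgebra K g]

variable (K) in
/-- `⊕_{i ≤ n} g(i)`, where `g(i)` is the eigenspace of `ad h` with eigenvalue `i`. -/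
def adEigenspacesLE (h : g) (n : ℤ) : Submodule K g :=
  ⨆ i : ℤ, ⨆ _ : i ≤ n, (ad K g h).eigenspace (i : K)

lemma eigenspace_le_adEigenspacesLE {h : g} {i n : ℤ} (hi : i ≤ n) :
    (ad K g h).eigenspace (i : K) ≤ adEigenspacesLE K h n :=
  le_iSup₂_of_le i hi le_rfl

lemma adEigenspacesLE_mono (h : g) : Monotone (adEigenspacesLE K h) :=
  fun _ _ hab => iSup₂_le fun _ hi => eigenspace_le_adEigenspacesLE (hi.trans hab)

lemma lie_mem_eigenspace_add {h x y : g} {μ ν : K}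
    (hx : x ∈ (ad K g h).eigenspace μ) (hy : y ∈ (ad K g h).eigenspace ν) :
    ⁅x, y⁆ ∈ (ad K g h).eigenspace (μ + ν) := by
  rw [End.mem_eigenspace_iff, ad_apply] at hx hy ⊢
  rw [leibniz_lie, hx, hy, smul_lie, lie_smul, add_smul]

lemma map₂_ad_adEigenspacesLE_le (h : g) (a b : ℤ) :
    Submodule.map₂ (ad K g : g →ₗ[K] End K g) (adEigenspacesLE K h a) (adEigenspacesLE K h b) ≤
      adEigenspacesLE K h (a + b) := by
  simp only [adEigenspacesLE, Submodule.map₂_iSup_left, Submodule.map₂_iSup_right]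
  refine iSup₂_le fun i hi => iSup₂_le fun j hj => Submodule.map₂_le.mpr fun x hx y hy => ?_
  have hxy := lie_mem_eigenspace_add hx hy
  rw [← Int.cast_add] at hxy
  exact eigenspace_le_adEigenspacesLE (by omega) hxy

lemma lie_mem_adEigenspacesLE {h x y : g} {a b : ℤ}
    (hx : x ∈ adEigenspacesLE K h a) (hy : y ∈ adEigenspacesLE K h b) :
    ⁅x, y⁆ ∈ adEigenspacesLE K h (a + b) :=
  map₂_ad_adEigenspacesLE_le h a b (Submodule.apply_mem_map₂ _ hx hy)

lemma foldr_lie_mem_adEigenspacesLE {h y : g} {k : ℤ} (hy : y ∈ adEigenspacesLE K h k) :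
    ∀ xs : List g, (∀ a ∈ xs, a ∈ adEigenspacesLE K h (-1)) →
      xs.foldr (fun a b => ⁅a, b⁆) y ∈ adEigenspacesLE K h (k - xs.length)
  | [], _ => by simpa using hy
  | a :: xs, hxs => by
    have hfold := lie_mem_adEigenspacesLE (hxs a List.mem_cons_self)
      (foldr_lie_mem_adEigenspacesLE hy xs fun b hb => hxs b (List.mem_cons_of_mem a hb))
    simp only [List.foldr_cons, List.length_cons, Nat.cast_succ]
    convert hfold using 2
    ring

lemma exists_adEigenspacesLE_eq_bot [CharZero K] [FiniteDimensional K g] (h : g) :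
    ∃ N : ℤ, ∀ n ≤ N, adEigenspacesLE K h n = ⊥ := by
  have hfin : {i : ℤ | (ad K g h).HasEigenvalue (i : K)}.Finite :=
    (ad K g h).finite_hasEigenvalue.preimage Int.cast_injective.injOn
  obtain ⟨N, hN⟩ := hfin.bddBelow
  refine ⟨N - 1, fun n hn => eq_bot_iff.mpr <| iSup₂_le fun i hi => ?_⟩
  by_contra hne
  have := hN (End.hasEigenvalue_iff.mpr fun hbot => hne (hbot.le.trans bot_le))
  omega

lemma exists_foldr_lie_eq_zero_of_le_adEigenspacesLE [CharZero K] [FiniteDimensional K g]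
    {h : g} {m : Submodule K g} (hm : m ≤ adEigenspacesLE K h (-1)) :
    ∃ n : ℕ, ∀ xs : List g, (∀ a ∈ xs, a ∈ m) → xs.length = n →
      ∀ y ∈ m, xs.foldr (fun a b => ⁅a, b⁆) y = 0 := by
  obtain ⟨N, hN⟩ := exists_adEigenspacesLE_eq_bot (K := K) h
  refine ⟨(-1 - N).toNat, fun xs hxs hlen y hy => ?_⟩
  have hfold := foldr_lie_mem_adEigenspacesLE (hm hy) xs fun a ha => hm (hxs a ha)
  rwa [hN _ (by omega), Submodule.mem_bot] at hfold

lemma invariantForm_eq_zero_of_mem_eigenspace (B : g →ₗ[K] g →ₗ[K] K)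
    (hinv : ∀ x y z : g, B ⁅x, y⁆ z = B x ⁅y, z⁆) {h x y : g} {μ ν : K}
    (hx : x ∈ (ad K g h).eigenspace μ) (hy : y ∈ (ad K g h).eigenspace ν) (hμν : μ + ν ≠ 0) :
    B x y = 0 := by
  rw [End.mem_eigenspace_iff, ad_apply] at hx hy
  have hxh : ⁅x, h⁆ = -(μ • x) := by rw [← lie_skew, hx]
  have key := hinv x h y
  rw [hxh, hy, map_neg, map_smul, map_smul, LinearMap.neg_apply, LinearMap.smul_apply,
    smul_eq_mul, smul_eq_mul] at key
  exact (mul_eq_zero.mp (by linear_combination -key : (μ + ν) * B x y = 0)).resolve_left hμν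

lemma adEigenspacesLE_le_ker [CharZero K] (B : g →ₗ[K] g →ₗ[K] K)
    (hinv : ∀ x y z : g, B ⁅x, y⁆ z = B x ⁅y, z⁆) {h x : g} {d n : ℤ}
    (hx : x ∈ (ad K g h).eigenspace (d : K)) (hn : n < -d) :
    adEigenspacesLE K h n ≤ LinearMap.ker (B x) :=
  iSup₂_le fun i hi y hy => invariantForm_eq_zero_of_mem_eigenspace B hinv hx hy
    (by exact_mod_cast (by omega : d + i ≠ 0))

lemma map₂_ad_sup_adEigenspacesLE_le {h : g} {l : Submodule K g}
    (hl : l ≤ adEigenspacesLE K h (-1)) :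
    Submodule.map₂ (ad K g : g →ₗ[K] End K g)
        (l ⊔ adEigenspacesLE K h (-2)) (l ⊔ adEigenspacesLE K h (-2)) ≤
      Submodule.map₂ (ad K g : g →ₗ[K] End K g) l l ⊔ adEigenspacesLE K h (-3) := by
  have hF : adEigenspacesLE K h (-2) ≤ adEigenspacesLE K h (-1) :=
    adEigenspacesLE_mono h (by norm_num)
  have h12 := map₂_ad_adEigenspacesLE_le (K := K) h (-1) (-2)
  have h21 := map₂_ad_adEigenspacesLE_le (K := K) h (-2) (-1)
  rw [Submodule.map₂_sup_left, Submodule.map₂_sup_right, Submodule.map₂_sup_right]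
  refine sup_le (sup_le le_sup_left ?_) (sup_le ?_ ?_) <;> refine le_sup_of_le_right ?_
  · exact (Submodule.map₂_le_map₂_left hl).trans h12
  · exact (Submodule.map₂_le_map₂_right hl).trans h21
  · exact (Submodule.map₂_le_map₂_left hF).trans h12

end LieAlgebra

theorem m_nilpotent_subalgebra_and_chi_character_general
    {K g : Type*} [Field K] [CharZero K]
    [LieRing g] [LieAlgebra K g] [FiniteDimensional K g]
    (e h f : g) (ht : IsSl2Triple h e f)
    (B : g →ₗ[K] g →ₗ[K] K)
    (hinv : ∀ x y z : g, B ⁅x, y⁆ z = B x ⁅y, z⁆)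
    (l : Submodule K g)
    (hl : l ≤ Module.End.eigenspace (ad K g h) (-1 : K))
    (hiso : ∀ ξ ∈ l, ∀ η ∈ l, B e ⁅ξ, η⁆ = 0)
    (m : Submodule K g)
    (hm : m = l ⊔ ⨆ i : ℤ, ⨆ _ : i ≤ -2, Module.End.eigenspace (ad K g h) (i : K)) :
    (∀ x ∈ m, ∀ y ∈ m, ⁅x, y⁆ ∈ m) ∧
    (∃ n : ℕ, ∀ xs : List g, (∀ a ∈ xs, a ∈ m) → xs.length = n →
        ∀ y ∈ m, xs.foldr (fun a b => ⁅a, b⁆) y = 0) ∧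
    (∀ x ∈ m, ∀ y ∈ m, B e ⁅x, y⁆ = 0) := by
  change m = l ⊔ adEigenspacesLE K h (-2) at hm
  subst hm
  have he : e ∈ (ad K g h).eigenspace ((2 : ℤ) : K) := by
    simpa [End.mem_eigenspace_iff] using ht.lie_h_e_smul K
  have hl₁ : l ≤ adEigenspacesLE K h (-1) :=
    le_trans (by simpa using hl) (eigenspace_le_adEigenspacesLE le_rfl)
  have hm₁ : l ⊔ adEigenspacesLE K h (-2) ≤ adEigenspacesLE K h (-1) :=
    sup_le hl₁ (adEigenspacesLE_mono h (by norm_num))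
  have hχ : Submodule.map₂ (ad K g : g →ₗ[K] End K g)
      (l ⊔ adEigenspacesLE K h (-2)) (l ⊔ adEigenspacesLE K h (-2)) ≤ LinearMap.ker (B e) :=
    (map₂_ad_sup_adEigenspacesLE_le hl₁).trans <|
      sup_le (Submodule.map₂_le.mpr hiso) (adEigenspacesLE_le_ker B hinv he (by norm_num))
  refine ⟨fun x hx y hy => ?_, exists_foldr_lie_eq_zero_of_le_adEigenspacesLE hm₁,
    fun x hx y hy => hχ (Submodule.apply_mem_map₂ _ hx hy)⟩
  have hxy := lie_mem_adEigenspacesLE (hm₁ hx) (hm₁ hy)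
  norm_num at hxy
  exact Submodule.mem_sup_right hxy

/-- With `(e,h,f)` an `sl₂`-triple in a semisimple Lie algebra `g` over an
algebraically closed field of characteristic `0`, `χ = B(e,·)`, and `l ⊆ g(-1)` Lagrangian
for `ω_χ`, the subspace `m = l ⊕ ⊕_{i ≤ -2} g(i)` is a nilpotent Lie subalgebra of `g` and
`χ` vanishes on `[m, m]`, i.e. `χ` restricts to a character of `m`. -/
theorem m_nilpotent_subalgebra_and_chi_character
    {K g : Type*} [Field K] [IsAlgClosed K] [CharZero K]
    [LieRing g] [LieAlgebra K g] [FiniteDimensional K g]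
    [LieAlgebra.IsSemisimple K g]
    (e h f : g) (ht : IsSl2Triple h e f)
    (B : g →ₗ[K] g →ₗ[K] K)
    (hsymm : ∀ x y : g, B x y = B y x)
    (hBnondeg : ∀ x : g, (∀ y : g, B x y = 0) → x = 0)
    (hinv : ∀ x y z : g, B ⁅x, y⁆ z = B x ⁅y, z⁆)
    (l : Submodule K g)
    (hl : l ≤ Module.End.eigenspace (ad K g h) (-1 : K))
    (hiso : ∀ ξ ∈ l, ∀ η ∈ l, B e ⁅ξ, η⁆ = 0)
    (hlag : 2 * Module.finrank K l
        = Module.finrank K (Module.End.eigenspace (ad K g h) (-1 : K)))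
    (m : Submodule K g)
    (hm : m = l ⊔ ⨆ i : ℤ, ⨆ _ : i ≤ -2, Module.End.eigenspace (ad K g h) (i : K)) :
    (∀ x ∈ m, ∀ y ∈ m, ⁅x, y⁆ ∈ m) ∧
    (∃ n : ℕ, ∀ xs : List g, (∀ a ∈ xs, a ∈ m) → xs.length = n →
        ∀ y ∈ m, xs.foldr (fun a b => ⁅a, b⁆) y = 0) ∧
    (∀ x ∈ m, ∀ y ∈ m, B e ⁅x, y⁆ = 0) :=
  m_nilpotent_subalgebra_and_chi_character_general e h f ht B hinv l hl hiso m hm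
end

section
/- Let (e,h,f) be an sl2-triple in a semisimple Lie algebra g over an algebraically closed field of characteristic 0, and let V = [g,f] with form ω(ξ,η) = χ([ξ,η]) where χ = (e,·). Then ω is a nondegenerate skew-symmetric form on V. -/
/-!
By invariance of `B`, `ω(ξ, [f, y]) = B([[e, ξ], f], y)`; so by nondegeneracy a vector
`ξ ∈ [g, f]` lies in the radical of `ω` iff `[f, [e, ξ]] = 0`. The sl₂-fact
`ker (ad e) ∩ im (ad f) = 0`, used for the triple `(-h, f, e)` and then for `(h, e, f)`, gives
first `[e, ξ] = 0` and then `ξ = 0`.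

For that fact: `ker e ∩ im f` is `h`-stable, so if it is nonzero it contains an `h`-eigenvector
`v`, a primitive vector, whose weight is some `n ∈ ℕ`. Write `v = [f, x]` with `x` a generalized
eigenvector of weight `n + 2` (apply to any preimage the factor of the minimal polynomial of `h`
prime to `X - (n + 2)`). The `e`-string through `x` terminates, and at its last nonzero term the
commutator formula for `[f, e^(j+1) x]` forces the weight of `x` to be `-P` with `P ∈ ℕ`.
-/

open LieAlgebra LieModule Module.End Polynomial Set

theorem SemiconjBy.aeval {R A : Type*} [CommSemiring R] [Semiring A] [Algebra R A]
    {F a b : A} (h : SemiconjBy F a b) (q : R[X]) :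
    SemiconjBy F (aeval a q) (aeval b q) := by
  induction q using Polynomial.induction_on' with
  | add p q hp hq => simpa only [map_add] using hp.add_right hq
  | monomial n r =>
    simpa only [aeval_monomial] using
      SemiconjBy.mul_right (Algebra.commute_algebraMap_right r F) (h.pow_right n)

namespace Module.End

section CommRing

variable {R M : Type*} [CommRing R] [AddCommGroup M] [Module R M]

lemma mapsTo_maxGenEigenspace_of_semiconjBy {F A B : End R M} {μ ν : R}
    (h : SemiconjBy F (A - μ • 1) (B - ν • 1)) :
    MapsTo F (A.maxGenEigenspace μ) (B.maxGenEigenspace ν) := by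
  intro x hx
  obtain ⟨k, hk⟩ := (mem_maxGenEigenspace A μ x).mp hx
  refine (mem_maxGenEigenspace B ν _).mpr ⟨k, ?_⟩
  rw [← mul_apply, ← (h.pow_right k).eq, mul_apply, hk, map_zero]

lemma pow_apply_mem_maxGenEigenspace {A E : End R M} {d : R}
    (hE : ∀ c, MapsTo E (A.maxGenEigenspace c) (A.maxGenEigenspace (c + d)))
    {c : R} {x : M} (hx : x ∈ A.maxGenEigenspace c) (n : ℕ) :
    (E ^ n) x ∈ A.maxGenEigenspace (c + n * d) := by
  induction n with
  | zero => simpa using hx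
  | succ n ih => simpa [pow_succ', add_mul, add_assoc] using hE _ ih

end CommRing

variable {K M : Type*} [Field K] [AddCommGroup M] [Module K M] [FiniteDimensional K M]

lemma exists_hasEigenvector_of_mapsTo [IsAlgClosed K] {A : End K M} {p : Submodule K M}
    (hp : p ≠ ⊥) (hA : MapsTo A p p) : ∃ μ, ∃ v ∈ p, A.HasEigenvector μ v := by
  have : Nontrivial p := Submodule.nontrivial_iff_ne_bot.mpr hp
  obtain ⟨μ, hμ⟩ := exists_eigenvalue (A.restrict fun _ hx => hA hx)
  obtain ⟨w, hw⟩ := hμ.exists_hasEigenvector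
  refine ⟨μ, w, w.2, mem_eigenspace_iff.mpr ?_, fun h0 => hw.2 (Subtype.ext h0)⟩
  simpa using congrArg Subtype.val hw.apply_eq_smul

lemma exists_mem_maxGenEigenspace_apply_eq {F A B : End K M} (h : SemiconjBy F A B) {a : K}
    {v : M} (hv : v ∈ LinearMap.range F) (hBv : B v = a • v) :
    ∃ x ∈ A.maxGenEigenspace a, F x = v := by
  obtain ⟨x₀, rfl⟩ := hv
  obtain ⟨q, hpq, hq⟩ := exists_eq_pow_rootMultiplicity_mul_and_not_dvd (minpoly K A)
    (minpoly.ne_zero (Algebra.IsIntegral.isIntegral A)) a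
  have hqa : q.eval a ≠ 0 := by rwa [dvd_iff_isRoot] at hq
  refine ⟨(q.eval a)⁻¹ • aeval A q x₀, (mem_maxGenEigenspace A a _).mpr
    ⟨(minpoly K A).rootMultiplicity a, ?_⟩, ?_⟩
  · have hp : aeval A ((X - C a) ^ (minpoly K A).rootMultiplicity a * q) = 0 := by
      rw [← hpq, minpoly.aeval]
    rw [map_mul, map_pow, map_sub, aeval_X, aeval_C, Algebra.algebraMap_eq_smul_one] at hp
    rw [map_smul, ← mul_apply, hp, LinearMap.zero_apply, smul_zero]
  · rw [map_smul, ← mul_apply, (h.aeval q).eq, mul_apply,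
      aeval_apply_of_mem_apply_eq_smul hBv, smul_smul, inv_mul_cancel₀ hqa, one_smul]

lemma exists_pow_apply_eq_zero_of_mapsTo_maxGenEigenspace [CharZero K] {A E : End K M}
    {d : K} (hd : d ≠ 0)
    (hE : ∀ c, MapsTo E (A.maxGenEigenspace c) (A.maxGenEigenspace (c + d)))
    {c : K} {x : M} (hx : x ∈ A.maxGenEigenspace c) : ∃ n : ℕ, (E ^ n) x = 0 := by
  by_contra! hne
  have hinj : Function.Injective fun n : ℕ => c + n * d := fun m n hmn => by
    simpa [hd] using hmn
  refine infinite_range_of_injective hinj ((Submodule.finite_ne_bot_of_iSupIndep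
    A.independent_maxGenEigenspace).subset ?_)
  rintro _ ⟨n, rfl⟩
  exact (Submodule.ne_bot_iff _).mpr ⟨_, pow_apply_mem_maxGenEigenspace hE hx n, hne n⟩

end Module.End

namespace IsSl2Triple

variable {K L M : Type*} [Field K] [LieRing L] [LieAlgebra K L] [AddCommGroup M] [Module K M]
  [LieRingModule L M] [LieModule K L M] {h e f : L}

lemma lie_e_lie_h (t : IsSl2Triple h e f) (m : M) :
    ⁅e, ⁅h, m⁆⁆ = ⁅h, ⁅e, m⁆⁆ - 2 • ⁅e, m⁆ := by
  rw [leibniz_lie e h m, ← lie_skew e h, t.lie_h_e_nsmul, neg_lie, nsmul_lie]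
  abel

lemma lie_h_lie_f (t : IsSl2Triple h e f) (m : M) :
    ⁅h, ⁅f, m⁆⁆ = ⁅f, ⁅h, m⁆⁆ - 2 • ⁅f, m⁆ := by
  rw [leibniz_lie h f m, t.lie_h_f_nsmul, neg_lie, nsmul_lie]
  abel

lemma lie_f_lie_e (t : IsSl2Triple h e f) (m : M) :
    ⁅f, ⁅e, m⁆⁆ = ⁅e, ⁅f, m⁆⁆ - ⁅h, m⁆ := by
  rw [leibniz_lie f e m, ← lie_skew f e, t.lie_e_f, neg_lie]
  abel

lemma semiconjBy_toEnd_e (t : IsSl2Triple h e f) (c : K) :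
    SemiconjBy (toEnd K L M e) (toEnd K L M h - c • 1) (toEnd K L M h - (c + 2) • 1) := by
  ext m
  simp only [mul_apply, LinearMap.sub_apply, LinearMap.smul_apply, one_apply,
    toEnd_apply_apply, lie_sub, lie_smul, t.lie_e_lie_h]
  module

lemma semiconjBy_toEnd_f (t : IsSl2Triple h e f) :
    SemiconjBy (toEnd K L M f) (toEnd K L M h) (toEnd K L M h + (2 : K) • 1) := by
  ext m
  simp only [mul_apply, LinearMap.add_apply, LinearMap.smul_apply, one_apply,
    toEnd_apply_apply, t.lie_h_lie_f]
  module

variable (K) in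
lemma lie_f_pow_toEnd_e_succ (t : IsSl2Triple h e f) (m : M) (j : ℕ) :
    ⁅f, (toEnd K L M e ^ (j + 1)) m⁆ = (toEnd K L M e ^ (j + 1)) ⁅f, m⁆ -
      ((j + 1 : ℕ) : K) •
        (⁅h, (toEnd K L M e ^ j) m⁆ - (j : K) • (toEnd K L M e ^ j) m) := by
  induction j with
  | zero => simp [t.lie_f_lie_e]
  | succ j ih =>
    rw [← lie_e_pow_toEnd_e (m := m), t.lie_f_lie_e, ih, lie_sub, lie_smul, lie_sub, lie_smul,
      t.lie_e_lie_h, lie_e_pow_toEnd_e, lie_e_pow_toEnd_e]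
    push_cast
    module

variable [CharZero K] [FiniteDimensional K M]

lemma exists_nat_eq_neg_of_lie_e_lie_f_eq_zero (t : IsSl2Triple h e f) {x : M} {μ : K}
    (hx : x ∈ (toEnd K L M h).maxGenEigenspace μ) (hfx : ⁅f, x⁆ ≠ 0)
    (hefx : ⁅e, ⁅f, x⁆⁆ = 0) :
    ∃ n : ℕ, μ = -n := by
  have hE : ∀ c, MapsTo (toEnd K L M e) ((toEnd K L M h).maxGenEigenspace c)
      ((toEnd K L M h).maxGenEigenspace (c + 2)) := fun c =>
    mapsTo_maxGenEigenspace_of_semiconjBy (t.semiconjBy_toEnd_e c)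
  have hx0 : x ≠ 0 := by rintro rfl; exact hfx (lie_zero f)
  obtain ⟨n, hy0, hy1⟩ := Nat.exists_not_and_succ_of_not_zero_of_exists hx0
    (exists_pow_apply_eq_zero_of_mapsTo_maxGenEigenspace two_ne_zero hE hx)
  set y := (toEnd K L M e ^ n) x
  have hy : ⁅h, y⁆ = (n : K) • y := by
    have := t.lie_f_pow_toEnd_e_succ K x n
    rw [hy1, lie_zero, pow_succ, mul_apply, toEnd_apply_apply, hefx, map_zero, zero_sub,
      eq_comm, neg_eq_zero, smul_eq_zero, sub_eq_zero] at this
    exact this.resolve_left (Nat.cast_ne_zero.mpr n.succ_ne_zero)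
  have hyn : y ∈ (toEnd K L M h).maxGenEigenspace n :=
    eigenspace_le_maxGenEigenspace (mem_eigenspace_iff.mpr hy)
  have hyμ := pow_apply_mem_maxGenEigenspace hE hx n
  have hμn : μ + n * 2 = n := by
    by_contra hne
    exact hy0 (Submodule.disjoint_def.mp (disjoint_genEigenspace _ hne ⊤ ⊤) y hyμ hyn)
  exact ⟨n, by linear_combination hμn⟩

variable (K M) in
theorem disjoint_ker_toEnd_e_range_toEnd_f [IsAlgClosed K] (t : IsSl2Triple h e f) :
    Disjoint (LinearMap.ker (toEnd K L M e)) (LinearMap.range (toEnd K L M f)) := by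
  set W := LinearMap.ker (toEnd K L M e) ⊓ LinearMap.range (toEnd K L M f)
  have hW : MapsTo (toEnd K L M h) W W := by
    intro x hx
    obtain ⟨hxe, u, rfl⟩ := Submodule.mem_inf.mp hx
    rw [LinearMap.mem_ker, toEnd_apply_apply, toEnd_apply_apply] at hxe
    refine ⟨?_, ⁅h, u⁆ - 2 • u, ?_⟩
    · simp [t.lie_e_lie_h, hxe]
    · simp [t.lie_h_lie_f, lie_sub, lie_nsmul]
  rw [disjoint_iff]
  by_contra hne
  obtain ⟨μ, v, hvW, hv⟩ := exists_hasEigenvector_of_mapsTo hne hW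
  obtain ⟨hve, hvf⟩ := Submodule.mem_inf.mp hvW
  rw [LinearMap.mem_ker, toEnd_apply_apply] at hve
  have hprim : t.HasPrimitiveVectorWith v μ := ⟨hv.2, hv.apply_eq_smul, hve⟩
  obtain ⟨n, rfl⟩ := hprim.exists_nat
  obtain ⟨x, hx, rfl⟩ := exists_mem_maxGenEigenspace_apply_eq t.semiconjBy_toEnd_f hvf
    (a := (n : K) + 2) (by simp [hv.apply_eq_smul, add_smul])
  obtain ⟨P, hP⟩ := t.exists_nat_eq_neg_of_lie_e_lie_f_eq_zero hx hv.2 hve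
  have : ((n + 2 + P : ℕ) : K) = 0 := by push_cast; linear_combination hP
  exact absurd (Nat.cast_eq_zero.mp this) (by omega)

end IsSl2Triple

theorem omega_symplectic_on_ad_f_range_general
    {K g : Type*} [Field K] [IsAlgClosed K] [CharZero K]
    [LieRing g] [LieAlgebra K g] [FiniteDimensional K g]
    (e h f : g) (ht : IsSl2Triple h e f)
    (B : g →ₗ[K] g →ₗ[K] K)
    (hBnondeg : ∀ x : g, (∀ y : g, B x y = 0) → x = 0)
    (hinv : ∀ x y z : g, B ⁅x, y⁆ z = B x ⁅y, z⁆)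
    (V : Submodule K g) (hV : V = LinearMap.range ((ad K g f : g →ₗ[K] g))) :
    (∀ ξ ∈ V, ∀ η ∈ V, B e ⁅ξ, η⁆ = - B e ⁅η, ξ⁆) ∧
    (∀ ξ ∈ V, (∀ η ∈ V, B e ⁅ξ, η⁆ = 0) → ξ = 0) := by
  subst hV
  refine ⟨fun ξ _ η _ => by rw [← lie_skew ξ η, map_neg], fun ξ hξ hω => ?_⟩
  have hξef : ⁅⁅e, ξ⁆, f⁆ = 0 :=
    hBnondeg _ fun y => by rw [hinv, hinv]; exact hω _ ⟨y, rfl⟩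
  have heξ : ⁅e, ξ⁆ = 0 :=
    Submodule.disjoint_def.mp (ht.symm.disjoint_ker_toEnd_e_range_toEnd_f K g) _
      (by rw [LinearMap.mem_ker, toEnd_apply_apply, ← lie_skew, hξef, neg_zero]) ⟨ξ, rfl⟩
  exact Submodule.disjoint_def.mp (ht.disjoint_ker_toEnd_e_range_toEnd_f K g) ξ heξ hξ

/-- Let `(e,h,f)` be an `sl₂`-triple in a semisimple Lie algebra `g` over an
algebraically closed field of characteristic `0`, `B` an invariant nondegenerate symmetric
form, `χ = B(e,·)` and `V = [g,f] = im (ad f)`.  Then `ω(ξ,η) = χ([ξ,η])` is a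
nondegenerate skew-symmetric form on `V`. -/
theorem omega_symplectic_on_ad_f_range
    {K g : Type*} [Field K] [IsAlgClosed K] [CharZero K]
    [LieRing g] [LieAlgebra K g] [FiniteDimensional K g]
    [LieAlgebra.IsSemisimple K g]
    (e h f : g) (ht : IsSl2Triple h e f)
    (B : g →ₗ[K] g →ₗ[K] K)
    (hsymm : ∀ x y : g, B x y = B y x)
    (hBnondeg : ∀ x : g, (∀ y : g, B x y = 0) → x = 0)
    (hinv : ∀ x y z : g, B ⁅x, y⁆ z = B x ⁅y, z⁆)
    (V : Submodule K g) (hV : V = LinearMap.range ((ad K g f : g →ₗ[K] g))) :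
    (∀ ξ ∈ V, ∀ η ∈ V, B e ⁅ξ, η⁆ = - B e ⁅η, ξ⁆) ∧
    (∀ ξ ∈ V, (∀ η ∈ V, B e ⁅ξ, η⁆ = 0) → ξ = 0) :=
  omega_symplectic_on_ad_f_range_general e h f ht B hBnondeg hinv V hV
end

section
/- If R is a finitely generated commutative ℤ_{≥0}×ℤ-bigraded algebra and g_1,…,g_n are homogeneous elements generating the ideal R_{>0} (positive second grading), then for every N ≥ 1 the ideal generated by g_1^N,…,g_n^N contains R_{>β} for some β. -/
open DirectSum

/-- If `i` cannot be "subtracted" from `n`, then the `n`-th component of `r * (of i r')`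
vanishes. -/
theorem coe_mul_of_apply_eq_zero' {ι σ R : Type*} [DecidableEq ι] [AddMonoid ι]
    [Semiring R] [SetLike σ R] [AddSubmonoidClass σ R] (A : ι → σ) [SetLike.GradedMonoid A]
    (r : ⨁ i, A i) {i : ι} (r' : A i) (n : ι) (H : ∀ x : ι, x + i ≠ n) :
    ((r * DirectSum.of (fun i => A i) i r') n : R) = 0 := by
  classical
  rw [DirectSum.coe_mul_apply_eq_dfinsuppSum, DFinsupp.sum_comm]
  apply (DFinsupp.sum_single_index _).trans
  swap
  · simp_rw [ZeroMemClass.coe_zero, mul_zero, ite_self]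
    exact DFinsupp.sum_zero
  · rw [DFinsupp.sum, Finset.sum_ite_of_false, Finset.sum_const_zero]
    exact fun x _ h => H x h

/-- commutative core: Let `R` be a finitely generated commutative
`ℕ × ℤ`-bigraded algebra over a field `K`, let `R_{>0}` be the ideal generated by the
homogeneous elements of positive second degree, and let `g_1, …, g_n` be homogeneous
elements of positive second degree generating the ideal `R_{>0}`.  Then for every `N ≥ 1`
there is `β` such that every homogeneous component of second degree `> β` is contained in
the ideal generated by `g_1^N, …, g_n^N`. -/
theorem high_degree_in_power_ideal
    {K R : Type*} [Field K] [CommRing R] [Algebra K R] [Algebra.FiniteType K R]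
    (ℛ : ℕ × ℤ → Submodule K R) [GradedAlgebra ℛ]
    {n : ℕ} (g : Fin n → R)
    (deg : Fin n → ℕ × ℤ)
    (hdeg : ∀ j, 0 < (deg j).2 ∧ g j ∈ ℛ (deg j))
    (hgen : Ideal.span (Set.range g)
        = Ideal.span {x : R | ∃ i : ℕ, ∃ α : ℤ, 0 < α ∧ x ∈ ℛ (i, α)}) :
    ∀ N : ℕ, 1 ≤ N → ∃ β : ℤ, ∀ (i : ℕ) (α : ℤ), β < α →
      (ℛ (i, α) : Set R) ⊆ (Ideal.span (Set.range fun j => g j ^ N) : Ideal R) := by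
  intro N _hN
  classical
  set I : Ideal R := Ideal.span (Set.range g) with hI
  set J : Ideal R := Ideal.span (Set.range fun j => g j ^ N) with hJ
  -- Some power of `I` is contained in `J`, since each `g_j` lies in the radical of `J`.
  obtain ⟨M, hM⟩ : ∃ M : ℕ, I ^ M ≤ J := by
    apply Ideal.exists_pow_le_of_le_radical_of_fg
    · rw [hI, Ideal.span_le]
      rintro x ⟨j, rfl⟩
      exact Ideal.mem_radical_of_pow_mem
        (Ideal.le_radical (Ideal.subset_span ⟨j, rfl⟩))
    · exact Submodule.fg_span (Set.finite_range g)
  -- `D` bounds all the second degrees of the `g_j`, and `D ≥ 1`.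
  set D : ℕ := (Finset.univ.sup fun j : Fin n => (deg j).2.toNat) + 1 with hD
  have hDj : ∀ j : Fin n, (deg j).2 ≤ (D : ℤ) := by
    intro j
    have h1 : (deg j).2.toNat ≤ D := by
      rw [hD]
      have h2 := Finset.le_sup (f := fun j : Fin n => (deg j).2.toNat) (Finset.mem_univ j)
      beta_reduce at h2
      omega
    calc (deg j).2 ≤ ((deg j).2.toNat : ℤ) := Int.self_le_toNat _
      _ ≤ (D : ℤ) := by exact_mod_cast h1
  have hD1 : (1 : ℤ) ≤ (D : ℤ) := by
    have : 1 ≤ D := Nat.le_add_left 1 _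
    exact_mod_cast this
  -- Key lemma: homogeneous elements of second degree `> m * D` lie in `I ^ m`.
  have key : ∀ m : ℕ, ∀ i : ℕ, ∀ α : ℤ, (m : ℤ) * (D : ℤ) < α →
      ∀ x ∈ ℛ (i, α), x ∈ I ^ m := by
    intro m
    induction m with
    | zero => intro i α _ x _; simp
    | succ m ih =>
      intro i α hα x hx
      have hα0 : 0 < α := by
        have hm : (0 : ℤ) ≤ (m : ℤ) * (D : ℤ) := by positivity
        push_cast at hα
        nlinarith
      have hxI : x ∈ I := by
        rw [hgen]
        exact Ideal.subset_span ⟨i, α, hα0, hx⟩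
      obtain ⟨c, hc⟩ := Ideal.mem_span_range_iff_exists_fun.mp hxI
      have hxd : x = ∑ j, (DirectSum.decompose ℛ (c j * g j) (i, α) : R) := by
        conv_lhs => rw [← DirectSum.decompose_of_mem_same ℛ hx, ← hc]
        rw [DirectSum.decompose_sum, DFinsupp.finset_sum_apply,
          AddSubmonoidClass.coe_finset_sum]
      rw [hxd]
      refine Submodule.sum_mem _ fun j _ => ?_
      obtain ⟨hdj, hgj⟩ := hdeg j
      by_cases hle : (deg j).1 ≤ i
      · have hH : ∀ x : ℕ × ℤ, x + deg j = (i, α) ↔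
            x = (i - (deg j).1, α - (deg j).2) := by
          intro x
          simp only [Prod.ext_iff, Prod.fst_add, Prod.snd_add]
          omega
        have hproj : (DirectSum.decompose ℛ (c j * g j) (i, α) : R)
            = (DirectSum.decompose ℛ (c j) (i - (deg j).1, α - (deg j).2) : R) * g j := by
          rw [DirectSum.decompose_mul, DirectSum.decompose_of_mem ℛ hgj,
            DirectSum.coe_mul_of_apply_aux _ _ _ hH]
        rw [hproj, pow_succ]
        refine Ideal.mul_mem_mul ?_ (Ideal.subset_span ⟨j, rfl⟩)
        refine ih (i - (deg j).1) (α - (deg j).2) ?_ _ (SetLike.coe_mem _)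
        have h2 := hDj j
        have hcast : ((m + 1 : ℕ) : ℤ) * (D : ℤ) = (m : ℤ) * (D : ℤ) + (D : ℤ) := by
          push_cast
          ring
        rw [hcast] at hα
        linarith
      · have hzero : (DirectSum.decompose ℛ (c j * g j) (i, α) : R) = 0 := by
          rw [DirectSum.decompose_mul, DirectSum.decompose_of_mem ℛ hgj]
          refine coe_mul_of_apply_eq_zero' ℛ _ _ _ fun e he => ?_
          have h1 : e.1 + (deg j).1 = i := congrArg Prod.fst he
          omega
        rw [hzero]
        exact Submodule.zero_mem _
  refine ⟨(M : ℤ) * (D : ℤ), fun i α hα x hx => ?_⟩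
  exact hM (key M i α hα x hx)
end
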